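/- Let φ : 𝔻ⁿ → 𝔻ⁿ be holomorphic with φ(0) = 0 and Bergman constant B_φ ≤ 1, and suppose there exists a sequence {S_j} of biholomorphic bijections of 𝔻ⁿ onto itself such that φ∘S_j converges to the identity map uniformly on compact subsets of 𝔻ⁿ. Then C_φ is an isometry on the Bloch space of 𝔻ⁿ: for every Bloch function f on 𝔻ⁿ, f∘φ is Bloch and ‖f∘φ‖_B = ‖f‖_B. -/

import Mathlib

/-!
Schwarz's lemma on the polydisk `𝔻ⁿ = ball 0 1 ⊆ (Fin n → ℂ, sup norm)` drives both inequalities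
between `β_{f∘φ}` and `β_f`. Conjugating a holomorphic self-map by coordinatewise Möbius maps moves
a point `z` and its image to `0`, where Schwarz gives a derivative of sup-norm at most `1`. Hence
`H_{φ z}(φ'(z)u) ≤ n H_z(u)`, so the quotients defining `B_φ` are bounded and `B_φ ≤ 1` gives
`H_{φ z}(φ'(z)u) ≤ H_z(u)`; the chain rule then yields `β_{f∘φ} ≤ β_f`. For an automorphism both
the conjugated map and its inverse have sup-norm contractions as derivatives at `0`; mutually
inverse matrices whose rows have `ℓ¹`-norm at most `1` preserve the `ℓ²`-norm, so automorphisms are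
Bergman isometries and `|(f∘φ∘S_j)'(z)u| ≤ β_{f∘φ} H_z(u)^{1/2}`. By Weierstrass these derivatives
converge to `f'(z)u`, whence `β_f ≤ β_{f∘φ}`; and `f(φ 0) = f 0`.
-/

open Complex Metric Set

/-- The unit polydisk `𝔻ⁿ = { z ∈ ℂⁿ : |z_k| < 1 for all k }`. -/
def polydisk (n : ℕ) : Set (Fin n → ℂ) := {z | ∀ k, ‖z k‖ < 1}

/-- The Bergman metric on the polydisk: `H_z(u,ū) = Σ_k |u_k|²/(1−|z_k|²)²`. -/
noncomputable def polyH (n : ℕ) (z u : Fin n → ℂ) : ℝ :=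
  ∑ k, ‖u k‖ ^ 2 / (1 - ‖z k‖ ^ 2) ^ 2

/-- `Q_f(z) = sup_{u ≠ 0} |f'(z)u| / H_z(u,ū)^{1/2}` on the polydisk. -/
noncomputable def Qpoly (n : ℕ) (f : (Fin n → ℂ) → ℂ) (z : Fin n → ℂ) : ℝ :=
  sSup {r : ℝ | ∃ u : Fin n → ℂ, u ≠ 0 ∧
    r = ‖fderiv ℂ f z u‖ / Real.sqrt (polyH n z u)}

/-- The set of values `Q_f(z)` for `z ∈ 𝔻ⁿ`. -/
def blochValuesPoly (n : ℕ) (f : (Fin n → ℂ) → ℂ) : Set ℝ :=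
  {r : ℝ | ∃ z ∈ polydisk n, r = Qpoly n f z}

/-- The Bloch seminorm `β_f = sup_{z ∈ 𝔻ⁿ} Q_f(z)`. -/
noncomputable def blochSemiPoly (n : ℕ) (f : (Fin n → ℂ) → ℂ) : ℝ :=
  sSup (blochValuesPoly n f)

/-- `f` is a Bloch function on the polydisk. -/
def IsBlochPoly (n : ℕ) (f : (Fin n → ℂ) → ℂ) : Prop :=
  DifferentiableOn ℂ f (polydisk n) ∧ BddAbove (blochValuesPoly n f)

/-- The Bloch norm `‖f‖_B = |f(0)| + β_f` on the polydisk. -/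
noncomputable def blochNormPoly (n : ℕ) (f : (Fin n → ℂ) → ℂ) : ℝ :=
  ‖f 0‖ + blochSemiPoly n f

/-- The Bergman constant of a holomorphic self-map `φ` of the polydisk:
`B_φ = sup_{z ∈ 𝔻ⁿ} sup_{u ≠ 0} (H_{φ(z)}(φ'(z)u) / H_z(u))^{1/2}`. -/
noncomputable def bergmanConstPoly (n : ℕ) (φ : (Fin n → ℂ) → Fin n → ℂ) : ℝ :=
  sSup {r : ℝ | ∃ z ∈ polydisk n, ∃ u : Fin n → ℂ, u ≠ 0 ∧
    r = Real.sqrt (polyH n (φ z) (fderiv ℂ φ z u) / polyH n z u)}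

/-- `S` is a biholomorphic bijection (automorphism) of the polydisk. -/
def IsPolydiskAut (n : ℕ) (S : (Fin n → ℂ) → Fin n → ℂ) : Prop :=
  DifferentiableOn ℂ S (polydisk n) ∧ BijOn S (polydisk n) (polydisk n) ∧
  ∃ T : (Fin n → ℂ) → Fin n → ℂ, DifferentiableOn ℂ T (polydisk n) ∧
    InvOn T S (polydisk n) (polydisk n)

open Filter Topology

namespace Matrix

theorem norm_apply_le_one_of_sum_norm_le_one {m n α : Type*} [Fintype n]
    [SeminormedAddCommGroup α] {M : Matrix m n α} (hM : ∀ i, ∑ j, ‖M i j‖ ≤ 1) (i : m) (j : n) :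
    ‖M i j‖ ≤ 1 :=
  (Finset.single_le_sum (fun _ _ => norm_nonneg _) (Finset.mem_univ j)).trans (hM i)

variable {m n α : Type*} [Fintype m] [Fintype n]

theorem sum_norm_sq_mulVec_le [SeminormedRing α] {M : Matrix m n α}
    (hrow : ∀ i, ∑ j, ‖M i j‖ ≤ 1) (hcol : ∀ j, ∑ i, ‖M i j‖ ≤ 1) (v : n → α) :
    ∑ i, ‖(M *ᵥ v) i‖ ^ 2 ≤ ∑ j, ‖v j‖ ^ 2 := by
  have hrow_sq (i : m) : ‖(M *ᵥ v) i‖ ^ 2 ≤ ∑ j, ‖M i j‖ * ‖v j‖ ^ 2 := by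
    calc ‖(M *ᵥ v) i‖ ^ 2 ≤ (∑ j, ‖M i j‖ * ‖v j‖) ^ 2 := by
          gcongr
          exact (norm_sum_le _ _).trans (Finset.sum_le_sum fun j _ => norm_mul_le _ _)
      _ ≤ (∑ j, ‖M i j‖) * ∑ j, ‖M i j‖ * ‖v j‖ ^ 2 :=
          Finset.sum_sq_le_sum_mul_sum_of_sq_le_mul _ (fun _ _ => norm_nonneg _)
            (fun _ _ => by positivity) (fun j _ => by ring_nf; rfl)
      _ ≤ ∑ j, ‖M i j‖ * ‖v j‖ ^ 2 :=
          mul_le_of_le_one_left (by positivity) (hrow i)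
  calc ∑ i, ‖(M *ᵥ v) i‖ ^ 2 ≤ ∑ i, ∑ j, ‖M i j‖ * ‖v j‖ ^ 2 :=
        Finset.sum_le_sum fun i _ => hrow_sq i
    _ = ∑ j, (∑ i, ‖M i j‖) * ‖v j‖ ^ 2 := by
        rw [Finset.sum_comm]; simp only [Finset.sum_mul]
    _ ≤ ∑ j, ‖v j‖ ^ 2 :=
        Finset.sum_le_sum fun j _ => mul_le_of_le_one_left (by positivity) (hcol j)

theorem sum_norm_col_le_one_of_mul_eq_one [DecidableEq m] [NormedRing α] [NormOneClass α]
    {M : Matrix m n α} {N : Matrix n m α}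
    (hM : ∀ i, ∑ j, ‖M i j‖ ≤ 1) (hN : ∀ i, ∑ j, ‖N i j‖ ≤ 1) (hMN : M * N = 1) (j : n) :
    ∑ i, ‖M i j‖ ≤ 1 := by
  -- The diagonal of `M * N` forces `‖N l i‖ = 1` wherever `M i l ≠ 0`.
  have hsupp (i : m) (l : n) : ‖M i l‖ * ‖N l i‖ = ‖M i l‖ := by
    have hgap (l : n) : 0 ≤ ‖M i l‖ * (1 - ‖N l i‖) :=
      mul_nonneg (norm_nonneg _) (sub_nonneg.2 (norm_apply_le_one_of_sum_norm_le_one hN l i))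
    have hdiag : 1 ≤ ∑ l, ‖M i l‖ * ‖N l i‖ := by
      calc (1 : ℝ) = ‖(M * N) i i‖ := by simp [hMN]
        _ ≤ ∑ l, ‖M i l‖ * ‖N l i‖ :=
          (norm_sum_le _ _).trans (Finset.sum_le_sum fun l _ => norm_mul_le _ _)
    have hzero : ∑ l, ‖M i l‖ * (1 - ‖N l i‖) = 0 := by
      refine le_antisymm ?_ (Finset.sum_nonneg fun l _ => hgap l)
      simp only [mul_sub, mul_one, Finset.sum_sub_distrib]
      linarith [hM i]
    have := (Finset.sum_eq_zero_iff_of_nonneg fun l _ => hgap l).1 hzero l (Finset.mem_univ _)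
    linarith
  calc ∑ i, ‖M i j‖ = ∑ i, ‖M i j‖ * ‖N j i‖ := by simp only [hsupp]
    _ ≤ ∑ i, ‖N j i‖ := Finset.sum_le_sum fun i _ =>
        mul_le_of_le_one_left (norm_nonneg _) (norm_apply_le_one_of_sum_norm_le_one hM i j)
    _ ≤ 1 := hN j

theorem sum_norm_sq_mulVec_eq_of_mul_eq_one [DecidableEq m] [NormedCommRing α] [NormOneClass α]
    {M N : Matrix m m α} (hM : ∀ i, ∑ j, ‖M i j‖ ≤ 1) (hN : ∀ i, ∑ j, ‖N i j‖ ≤ 1)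
    (hNM : N * M = 1) (v : m → α) : ∑ i, ‖(M *ᵥ v) i‖ ^ 2 = ∑ i, ‖v i‖ ^ 2 := by
  have hMN : M * N = 1 := mul_eq_one_comm.1 hNM
  refine le_antisymm (sum_norm_sq_mulVec_le hM (sum_norm_col_le_one_of_mul_eq_one hM hN hMN) v) ?_
  calc ∑ i, ‖v i‖ ^ 2 = ∑ i, ‖(N *ᵥ M *ᵥ v) i‖ ^ 2 := by rw [mulVec_mulVec, hNM, one_mulVec]
    _ ≤ ∑ i, ‖(M *ᵥ v) i‖ ^ 2 :=
        sum_norm_sq_mulVec_le hN (sum_norm_col_le_one_of_mul_eq_one hN hM hNM) _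

end Matrix

namespace ContinuousLinearMap

variable {ι 𝕜 : Type*} [Fintype ι] [DecidableEq ι] [RCLike 𝕜]

open scoped Matrix.Norms.Operator in
theorem sum_norm_toMatrix'_apply_le (A : (ι → 𝕜) →L[𝕜] ι → 𝕜) (i : ι) :
    ∑ j, ‖LinearMap.toMatrix' (A : (ι → 𝕜) →ₗ[𝕜] ι → 𝕜) i j‖ ≤ ‖A‖ := by
  rw [← Matrix.linfty_opNorm_toMatrix, Matrix.linfty_opNorm_def]
  simpa using NNReal.coe_le_coe.2 <| Finset.le_sup
    (f := fun i => ∑ j, ‖LinearMap.toMatrix' (A : (ι → 𝕜) →ₗ[𝕜] ι → 𝕜) i j‖₊) (Finset.mem_univ i)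

theorem sum_norm_sq_apply_eq_of_comp_eq_id {A B : (ι → 𝕜) →L[𝕜] ι → 𝕜} (hA : ‖A‖ ≤ 1)
    (hB : ‖B‖ ≤ 1) (hBA : B.comp A = .id 𝕜 _) (v : ι → 𝕜) :
    ∑ i, ‖A v i‖ ^ 2 = ∑ i, ‖v i‖ ^ 2 := by
  have hNM : LinearMap.toMatrix' (B : (ι → 𝕜) →ₗ[𝕜] ι → 𝕜) *
      LinearMap.toMatrix' (A : (ι → 𝕜) →ₗ[𝕜] ι → 𝕜) = 1 := by
    rw [← LinearMap.toMatrix'_comp, ← toLinearMap_comp, hBA, coe_id, LinearMap.toMatrix'_id]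
  simpa [LinearMap.toMatrix'_mulVec] using Matrix.sum_norm_sq_mulVec_eq_of_mul_eq_one
    (fun i => (sum_norm_toMatrix'_apply_le A i).trans hA)
    (fun i => (sum_norm_toMatrix'_apply_le B i).trans hB) hNM v

end ContinuousLinearMap

open scoped ComplexConjugate

noncomputable def mobius (a z : ℂ) : ℂ := (a - z) / (1 - conj a * z)

noncomputable def mobiusDeriv (a z : ℂ) : ℂ := (conj a * a - 1) / (1 - conj a * z) ^ 2

section Mobius

variable {a z : ℂ}

theorem one_sub_sq_norm_pos (ha : ‖a‖ < 1) : 0 < 1 - ‖a‖ ^ 2 := by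
  nlinarith [norm_nonneg a]

theorem sq_norm_one_sub_conj_mul (a z : ℂ) :
    ‖1 - conj a * z‖ ^ 2 = ‖a - z‖ ^ 2 + (1 - ‖a‖ ^ 2) * (1 - ‖z‖ ^ 2) := by
  simp only [Complex.sq_norm, normSq_apply, sub_re, sub_im, mul_re, mul_im, one_re, one_im,
    conj_re, conj_im]
  ring

theorem norm_sub_lt_norm_one_sub_conj_mul (ha : ‖a‖ < 1) (hz : ‖z‖ < 1) :
    ‖a - z‖ < ‖1 - conj a * z‖ := by
  have h := mul_pos (one_sub_sq_norm_pos ha) (one_sub_sq_norm_pos hz)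
  have := sq_norm_one_sub_conj_mul a z
  nlinarith [norm_nonneg (a - z), norm_nonneg (1 - conj a * z)]

theorem one_sub_conj_mul_ne_zero (ha : ‖a‖ < 1) (hz : ‖z‖ < 1) : 1 - conj a * z ≠ 0 :=
  norm_pos_iff.1 ((norm_nonneg _).trans_lt (norm_sub_lt_norm_one_sub_conj_mul ha hz))

theorem norm_mobius_lt_one (ha : ‖a‖ < 1) (hz : ‖z‖ < 1) : ‖mobius a z‖ < 1 := by
  rw [mobius, norm_div, div_lt_one (norm_pos_iff.2 (one_sub_conj_mul_ne_zero ha hz))]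
  exact norm_sub_lt_norm_one_sub_conj_mul ha hz

@[simp] theorem mobius_self (a : ℂ) : mobius a a = 0 := by simp [mobius]

@[simp] theorem mobius_zero (a : ℂ) : mobius a 0 = a := by simp [mobius]

theorem mobius_mobius (ha : ‖a‖ < 1) (hz : ‖z‖ < 1) : mobius a (mobius a z) = z := by
  have hd : 1 - z * conj a ≠ 0 := mul_comm (conj a) z ▸ one_sub_conj_mul_ne_zero ha hz
  have hd' := one_sub_conj_mul_ne_zero ha (norm_mobius_lt_one ha hz)
  unfold mobius at hd' ⊢
  rw [div_eq_iff hd']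
  field_simp
  ring

theorem hasDerivAt_mobius (h : 1 - conj a * z ≠ 0) : HasDerivAt (mobius a) (mobiusDeriv a z) z := by
  have hnum : HasDerivAt (fun w => a - w) (-1) z := by simpa using (hasDerivAt_id z).const_sub a
  have hden : HasDerivAt (fun w => 1 - conj a * w) (-conj a) z := by
    simpa using ((hasDerivAt_id z).const_mul (conj a)).const_sub 1
  refine (hnum.div hden h).congr_deriv ?_
  rw [mobiusDeriv, div_eq_div_iff (pow_ne_zero 2 h) (pow_ne_zero 2 h)]
  ring

theorem mobiusDeriv_zero (a : ℂ) : mobiusDeriv a 0 = -((1 - ‖a‖ ^ 2 : ℝ) : ℂ) := by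
  simp only [mobiusDeriv, conj_mul', mul_zero, sub_zero, one_pow, div_one]
  push_cast
  ring

theorem mobiusDeriv_self (ha : ‖a‖ < 1) : mobiusDeriv a a = -((1 - ‖a‖ ^ 2 : ℝ) : ℂ)⁻¹ := by
  have h : ((1 - ‖a‖ ^ 2 : ℝ) : ℂ) ≠ 0 := mod_cast (one_sub_sq_norm_pos ha).ne'
  rw [mobiusDeriv, conj_mul']
  push_cast at h ⊢
  field_simp
  ring

end Mobius

section Polydisk

variable {n : ℕ}

theorem polydisk_eq_ball (n : ℕ) : polydisk n = ball 0 1 := by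
  ext z
  simp [polydisk, pi_norm_lt_iff one_pos]

theorem isOpen_polydisk (n : ℕ) : IsOpen (polydisk n) := polydisk_eq_ball n ▸ isOpen_ball

theorem polydisk_mem_nhds {z : Fin n → ℂ} (hz : z ∈ polydisk n) : polydisk n ∈ 𝓝 z :=
  (isOpen_polydisk n).mem_nhds hz

theorem zero_mem_polydisk (n : ℕ) : (0 : Fin n → ℂ) ∈ polydisk n := fun k => by simp

theorem polyH_nonneg (z u : Fin n → ℂ) : 0 ≤ polyH n z u :=
  Finset.sum_nonneg fun _ _ => by positivity

theorem polyH_zero (u : Fin n → ℂ) : polyH n 0 u = ∑ k, ‖u k‖ ^ 2 := by simp [polyH]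

theorem polyH_zero_le (u : Fin n → ℂ) : polyH n 0 u ≤ n * ‖u‖ ^ 2 := by
  rw [polyH_zero]
  calc ∑ k, ‖u k‖ ^ 2 ≤ ∑ _k : Fin n, ‖u‖ ^ 2 :=
        Finset.sum_le_sum fun k _ => by gcongr; exact norm_le_pi_norm u k
    _ = n * ‖u‖ ^ 2 := by simp

theorem sq_norm_apply_le_polyH {z : Fin n → ℂ} (hz : z ∈ polydisk n) (u : Fin n → ℂ)
    (k : Fin n) : ‖u k‖ ^ 2 ≤ polyH n z u := by
  have hpos := one_sub_sq_norm_pos (hz k)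
  calc ‖u k‖ ^ 2 ≤ ‖u k‖ ^ 2 / (1 - ‖z k‖ ^ 2) ^ 2 :=
        le_div_self (by positivity) (by positivity)
          (pow_le_one₀ hpos.le (by nlinarith [norm_nonneg (z k)]))
    _ ≤ polyH n z u :=
        Finset.single_le_sum (f := fun k => ‖u k‖ ^ 2 / (1 - ‖z k‖ ^ 2) ^ 2)
          (fun k _ => by positivity) (Finset.mem_univ k)

theorem norm_le_sqrt_polyH {z : Fin n → ℂ} (hz : z ∈ polydisk n) (u : Fin n → ℂ) :
    ‖u‖ ≤ Real.sqrt (polyH n z u) :=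
  (pi_norm_le_iff_of_nonneg (Real.sqrt_nonneg _)).2 fun k =>
    Real.le_sqrt_of_sq_le (sq_norm_apply_le_polyH hz u k)

theorem sq_norm_le_polyH {z : Fin n → ℂ} (hz : z ∈ polydisk n) (u : Fin n → ℂ) :
    ‖u‖ ^ 2 ≤ polyH n z u :=
  (Real.le_sqrt (norm_nonneg u) (polyH_nonneg z u)).1 (norm_le_sqrt_polyH hz u)

theorem polyH_pos {z u : Fin n → ℂ} (hz : z ∈ polydisk n) (hu : u ≠ 0) : 0 < polyH n z u :=
  (pow_pos (norm_pos_iff.2 hu) 2).trans_le (sq_norm_le_polyH hz u)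

end Polydisk

noncomputable def polyMobius {n : ℕ} (a z : Fin n → ℂ) : Fin n → ℂ := fun k => mobius (a k) (z k)

noncomputable def polyMobiusDeriv {n : ℕ} (a z : Fin n → ℂ) : (Fin n → ℂ) →L[ℂ] Fin n → ℂ :=
  ContinuousLinearMap.pi fun k => mobiusDeriv (a k) (z k) • ContinuousLinearMap.proj k

section PolyMobius

variable {n : ℕ} {a z : Fin n → ℂ}

@[simp] theorem polyMobiusDeriv_apply (a z u : Fin n → ℂ) (k : Fin n) :
    polyMobiusDeriv a z u k = mobiusDeriv (a k) (z k) * u k := rfl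

@[simp] theorem polyMobius_self (a : Fin n → ℂ) : polyMobius a a = 0 := by
  ext k; simp [polyMobius]

@[simp] theorem polyMobius_zero (a : Fin n → ℂ) : polyMobius a 0 = a := by
  ext k; simp [polyMobius]

theorem mapsTo_polyMobius (ha : a ∈ polydisk n) :
    MapsTo (polyMobius a) (polydisk n) (polydisk n) :=
  fun _ hz k => norm_mobius_lt_one (ha k) (hz k)

theorem polyMobius_polyMobius (ha : a ∈ polydisk n) (hz : z ∈ polydisk n) :
    polyMobius a (polyMobius a z) = z := by
  ext k; exact mobius_mobius (ha k) (hz k)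

theorem hasFDerivAt_polyMobius (ha : a ∈ polydisk n) (hz : z ∈ polydisk n) :
    HasFDerivAt (polyMobius a) (polyMobiusDeriv a z) z := by
  refine hasFDerivAt_pi'' fun k => ?_
  have h := hasDerivAt_mobius (one_sub_conj_mul_ne_zero (ha k) (hz k))
  exact h.comp_hasFDerivAt z (hasFDerivAt_apply k z)

theorem differentiableOn_polyMobius (ha : a ∈ polydisk n) :
    DifferentiableOn ℂ (polyMobius a) (polydisk n) :=
  fun _ hz => (hasFDerivAt_polyMobius ha hz).differentiableAt.differentiableWithinAt

theorem polyMobiusDeriv_zero_self_apply (ha : a ∈ polydisk n) (u : Fin n → ℂ) :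
    polyMobiusDeriv a 0 (polyMobiusDeriv a a u) = u := by
  ext k
  have h : ((1 - ‖a k‖ ^ 2 : ℝ) : ℂ) ≠ 0 := mod_cast (one_sub_sq_norm_pos (ha k)).ne'
  simp only [polyMobiusDeriv_apply, Pi.zero_apply, mobiusDeriv_zero, mobiusDeriv_self (ha k)]
  field_simp

theorem polyH_zero_polyMobiusDeriv_self (ha : a ∈ polydisk n) (u : Fin n → ℂ) :
    polyH n 0 (polyMobiusDeriv a a u) = polyH n a u := by
  rw [polyH_zero]
  simp only [polyH, polyMobiusDeriv_apply, mobiusDeriv_self (ha _)]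
  refine Finset.sum_congr rfl fun k _ => ?_
  rw [norm_mul, norm_neg, norm_inv, Complex.norm_real,
    Real.norm_of_nonneg (one_sub_sq_norm_pos (ha k)).le]
  field_simp

end PolyMobius

noncomputable def mobiusConj {n : ℕ} (φ : (Fin n → ℂ) → Fin n → ℂ) (z : Fin n → ℂ) :
    (Fin n → ℂ) → Fin n → ℂ :=
  polyMobius (φ z) ∘ φ ∘ polyMobius z

section MobiusConj

variable {n : ℕ} {φ : (Fin n → ℂ) → Fin n → ℂ} {z : Fin n → ℂ}

@[simp] theorem mobiusConj_zero (φ : (Fin n → ℂ) → Fin n → ℂ) (z : Fin n → ℂ) :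
    mobiusConj φ z 0 = 0 := by
  simp [mobiusConj]

theorem mapsTo_mobiusConj (hmap : MapsTo φ (polydisk n) (polydisk n)) (hz : z ∈ polydisk n) :
    MapsTo (mobiusConj φ z) (polydisk n) (polydisk n) :=
  (mapsTo_polyMobius (hmap hz)).comp (hmap.comp (mapsTo_polyMobius hz))

theorem differentiableOn_mobiusConj (hmap : MapsTo φ (polydisk n) (polydisk n))
    (hφ : DifferentiableOn ℂ φ (polydisk n)) (hz : z ∈ polydisk n) :
    DifferentiableOn ℂ (mobiusConj φ z) (polydisk n) :=
  (differentiableOn_polyMobius (hmap hz)).comp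
    (hφ.comp (differentiableOn_polyMobius hz) (mapsTo_polyMobius hz))
    (hmap.comp (mapsTo_polyMobius hz))

theorem fderiv_mobiusConj_zero_apply (hz : z ∈ polydisk n) (hφz : φ z ∈ polydisk n)
    (hd : DifferentiableAt ℂ φ z) (u : Fin n → ℂ) :
    fderiv ℂ (mobiusConj φ z) 0 (polyMobiusDeriv z z u) =
      polyMobiusDeriv (φ z) (φ z) (fderiv ℂ φ z u) := by
  have h₁ := hasFDerivAt_polyMobius hz (zero_mem_polydisk n)
  have h₂ : HasFDerivAt φ (fderiv ℂ φ z) (polyMobius z 0) := by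
    rw [polyMobius_zero]; exact hd.hasFDerivAt
  have h₃ : HasFDerivAt (polyMobius (φ z)) (polyMobiusDeriv (φ z) (φ z)) (φ (polyMobius z 0)) := by
    rw [polyMobius_zero]; exact hasFDerivAt_polyMobius hφz hφz
  rw [mobiusConj, (h₃.comp 0 (h₂.comp 0 h₁)).fderiv]
  simp [polyMobiusDeriv_zero_self_apply hz]

theorem polyH_fderiv_eq_polyH_zero_fderiv_mobiusConj (hz : z ∈ polydisk n)
    (hφz : φ z ∈ polydisk n) (hd : DifferentiableAt ℂ φ z) (u : Fin n → ℂ) :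
    polyH n (φ z) (fderiv ℂ φ z u) =
      polyH n 0 (fderiv ℂ (mobiusConj φ z) 0 (polyMobiusDeriv z z u)) := by
  rw [fderiv_mobiusConj_zero_apply hz hφz hd, polyH_zero_polyMobiusDeriv_self hφz]

end MobiusConj

section Biholomorphic

variable {n : ℕ}

theorem norm_fderiv_zero_le_one {F : (Fin n → ℂ) → Fin n → ℂ}
    (hF : DifferentiableOn ℂ F (polydisk n)) (hmaps : MapsTo F (polydisk n) (polydisk n))
    (hF0 : F 0 = 0) : ‖fderiv ℂ F 0‖ ≤ 1 := by
  rw [polydisk_eq_ball] at hF hmaps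
  refine Complex.norm_fderiv_le_one_of_mapsTo_ball hF ?_ one_pos
  rw [hF0]
  exact hmaps.mono_right ball_subset_closedBall

theorem polyH_zero_fderiv_zero_apply {Φ Ψ : (Fin n → ℂ) → Fin n → ℂ}
    (hΦ : DifferentiableOn ℂ Φ (polydisk n)) (hΨ : DifferentiableOn ℂ Ψ (polydisk n))
    (hΦmaps : MapsTo Φ (polydisk n) (polydisk n)) (hΨmaps : MapsTo Ψ (polydisk n) (polydisk n))
    (hΦ0 : Φ 0 = 0) (hinv : LeftInvOn Ψ Φ (polydisk n)) (v : Fin n → ℂ) :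
    polyH n 0 (fderiv ℂ Φ 0 v) = polyH n 0 v := by
  have h0 := polydisk_mem_nhds (zero_mem_polydisk n)
  have hΨ0 : Ψ 0 = 0 := by simpa [hΦ0] using hinv (zero_mem_polydisk n)
  have hΨd : DifferentiableAt ℂ Ψ (Φ 0) := by rw [hΦ0]; exact hΨ.differentiableAt h0
  have hcomp : (fderiv ℂ Ψ 0).comp (fderiv ℂ Φ 0) = .id ℂ _ := by
    have hid : Ψ ∘ Φ =ᶠ[𝓝 0] id := Filter.eventually_of_mem h0 hinv
    have h := fderiv_comp 0 hΨd (hΦ.differentiableAt h0)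
    rwa [hid.fderiv_eq, fderiv_id, hΦ0, eq_comm] at h
  simp only [polyH_zero]
  exact ContinuousLinearMap.sum_norm_sq_apply_eq_of_comp_eq_id
    (norm_fderiv_zero_le_one hΦ hΦmaps hΦ0) (norm_fderiv_zero_le_one hΨ hΨmaps hΨ0) hcomp v

end Biholomorphic

section BergmanMetric

variable {n : ℕ} {φ : (Fin n → ℂ) → Fin n → ℂ} {z : Fin n → ℂ}

theorem polyH_fderiv_le_card_mul (hmap : MapsTo φ (polydisk n) (polydisk n))
    (hφ : DifferentiableOn ℂ φ (polydisk n)) (hz : z ∈ polydisk n) (u : Fin n → ℂ) :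
    polyH n (φ z) (fderiv ℂ φ z u) ≤ n * polyH n z u := by
  set w := polyMobiusDeriv z z u
  set A := fderiv ℂ (mobiusConj φ z) 0
  have hA : ‖A‖ ≤ 1 := norm_fderiv_zero_le_one (differentiableOn_mobiusConj hmap hφ hz)
    (mapsTo_mobiusConj hmap hz) (mobiusConj_zero φ z)
  rw [polyH_fderiv_eq_polyH_zero_fderiv_mobiusConj hz (hmap hz)
    (hφ.differentiableAt (polydisk_mem_nhds hz)), ← polyH_zero_polyMobiusDeriv_self hz u]
  calc polyH n 0 (A w) ≤ n * ‖A w‖ ^ 2 := polyH_zero_le _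
    _ ≤ n * ‖w‖ ^ 2 := by
        gcongr
        exact (A.le_opNorm w).trans (mul_le_of_le_one_left (norm_nonneg _) hA)
    _ ≤ n * polyH n 0 w := by gcongr; exact sq_norm_le_polyH (zero_mem_polydisk n) w

theorem IsPolydiskAut.polyH_fderiv {S : (Fin n → ℂ) → Fin n → ℂ} (hS : IsPolydiskAut n S)
    (hz : z ∈ polydisk n) (u : Fin n → ℂ) : polyH n (S z) (fderiv ℂ S z u) = polyH n z u := by
  obtain ⟨hSd, hSbij, T, hTd, hTS, hST⟩ := hS
  have hTmaps : MapsTo T (polydisk n) (polydisk n) := (hSbij.symm ⟨hST, hTS⟩).mapsTo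
  have hSz := hSbij.mapsTo hz
  have hinv : LeftInvOn (mobiusConj T (S z)) (mobiusConj S z) (polydisk n) := by
    intro w hw
    have hw' := mapsTo_polyMobius hz hw
    simp only [mobiusConj, Function.comp_apply, hTS hz]
    rw [polyMobius_polyMobius hSz (hSbij.mapsTo hw'), hTS hw', polyMobius_polyMobius hz hw]
  rw [polyH_fderiv_eq_polyH_zero_fderiv_mobiusConj hz hSz
      (hSd.differentiableAt (polydisk_mem_nhds hz)),
    polyH_zero_fderiv_zero_apply (differentiableOn_mobiusConj hSbij.mapsTo hSd hz)
      (differentiableOn_mobiusConj hTmaps hTd hSz) (mapsTo_mobiusConj hSbij.mapsTo hz)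
      (mapsTo_mobiusConj hTmaps hSz) (mobiusConj_zero S z) hinv,
    polyH_zero_polyMobiusDeriv_self hz]

end BergmanMetric

section Convergence

variable {ι : Type*} {p : Filter ι}

theorem ContinuousOn.comp_tendstoLocallyUniformlyOn_id {X Y : Type*} [MetricSpace X]
    [ProperSpace X] [UniformSpace Y] {s : Set X} (hs : IsOpen s) {g : X → Y}
    (hg : ContinuousOn g s) {F : ι → X → X} (hF : TendstoLocallyUniformlyOn F id p s) :
    TendstoLocallyUniformlyOn (fun i => g ∘ F i) g p s := by
  rw [tendstoLocallyUniformlyOn_iff_forall_isCompact hs] at hF ⊢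
  intro K hKs hK
  obtain ⟨δ, hδ, hδs⟩ := hK.exists_cthickening_subset_open hs hKs
  have hg' : UniformContinuousOn g (cthickening δ K) :=
    hK.cthickening.uniformContinuousOn_of_continuous (hg.mono hδs)
  have hnear : ∀ᶠ i in p, ∀ x ∈ K, F i x ∈ cthickening δ K := by
    filter_upwards [Metric.tendstoUniformlyOn_iff.1 (hF K hKs hK) δ hδ] with i hi x hx
    exact mem_cthickening_of_dist_le _ x δ K hx (dist_comm x (F i x) ▸ (hi x hx).le)
  exact hg'.comp_tendstoUniformlyOn_eventually hnear (fun x hx => self_subset_cthickening K hx)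
    (hF K hKs hK)

theorem tendsto_fderiv_apply_of_tendstoLocallyUniformlyOn {E : Type*} [NormedAddCommGroup E]
    [NormedSpace ℂ E] {U : Set E} (hU : IsOpen U) {F : ι → E → ℂ} {G : E → ℂ}
    (hF : ∀ᶠ i in p, DifferentiableOn ℂ (F i) U) (hFG : TendstoLocallyUniformlyOn F G p U)
    {z : E} (hz : z ∈ U) (hG : DifferentiableAt ℂ G z) (u : E) :
    Tendsto (fun i => fderiv ℂ (F i) z u) p (𝓝 (fderiv ℂ G z u)) := by
  let ℓ : ℂ → E := fun t => z + t • u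
  have hℓ (t : ℂ) : HasDerivAt ℓ u t := by
    simpa only [id, one_smul] using ((hasDerivAt_id t).smul_const u).const_add z
  have hℓ0 : ℓ 0 = z := by simp [ℓ]
  have hℓc : Continuous ℓ := by fun_prop
  have hV : IsOpen (ℓ ⁻¹' U) := hU.preimage hℓc
  have h0V : (0 : ℂ) ∈ ℓ ⁻¹' U := by simpa [hℓ0] using hz
  have hderiv {H : E → ℂ} (hH : DifferentiableAt ℂ H z) : deriv (H ∘ ℓ) 0 = fderiv ℂ H z u := by
    rw [← hℓ0] at hH
    simpa [hℓ0] using (hH.hasFDerivAt.comp_hasDerivAt 0 (hℓ 0)).deriv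
  have hlim := ((hFG.comp ℓ (mapsTo_preimage ℓ U) hℓc.continuousOn).deriv
    (hF.mono fun i hi => hi.comp (fun t _ => (hℓ t).differentiableAt.differentiableWithinAt)
      (mapsTo_preimage ℓ U)) hV).tendsto_at h0V
  rw [hderiv hG] at hlim
  refine hlim.congr' ?_
  filter_upwards [hF] with i hi
  exact hderiv (hi.differentiableAt (hU.mem_nhds hz))

end Convergence

section Bloch

variable {n : ℕ} {f : (Fin n → ℂ) → ℂ} {z : Fin n → ℂ}

theorem Qpoly_nonneg (f : (Fin n → ℂ) → ℂ) (z : Fin n → ℂ) : 0 ≤ Qpoly n f z :=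
  Real.sSup_nonneg (by rintro _ ⟨u, -, rfl⟩; positivity)

theorem Qpoly_le {c : ℝ} (hz : z ∈ polydisk n) (hc : 0 ≤ c)
    (h : ∀ u, ‖fderiv ℂ f z u‖ ≤ c * Real.sqrt (polyH n z u)) : Qpoly n f z ≤ c := by
  refine Real.sSup_le ?_ hc
  rintro _ ⟨u, hu, rfl⟩
  rw [div_le_iff₀ (Real.sqrt_pos.2 (polyH_pos hz hu))]
  exact h u

theorem norm_fderiv_apply_le_Qpoly (hz : z ∈ polydisk n) (u : Fin n → ℂ) :
    ‖fderiv ℂ f z u‖ ≤ Qpoly n f z * Real.sqrt (polyH n z u) := by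
  rcases eq_or_ne u 0 with rfl | hu
  · simpa using mul_nonneg (Qpoly_nonneg f z) (Real.sqrt_nonneg _)
  have hbdd : BddAbove {r : ℝ | ∃ u : Fin n → ℂ, u ≠ 0 ∧
      r = ‖fderiv ℂ f z u‖ / Real.sqrt (polyH n z u)} := by
    refine ⟨‖fderiv ℂ f z‖, ?_⟩
    rintro _ ⟨v, hv, rfl⟩
    rw [div_le_iff₀ (Real.sqrt_pos.2 (polyH_pos hz hv))]
    exact ((fderiv ℂ f z).le_opNorm v).trans (by gcongr; exact norm_le_sqrt_polyH hz v)
  rw [← div_le_iff₀ (Real.sqrt_pos.2 (polyH_pos hz hu))]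
  exact le_csSup hbdd ⟨u, hu, rfl⟩

theorem blochSemiPoly_nonneg (f : (Fin n → ℂ) → ℂ) : 0 ≤ blochSemiPoly n f :=
  Real.sSup_nonneg (by rintro _ ⟨z, -, rfl⟩; exact Qpoly_nonneg f z)

theorem blochSemiPoly_le {c : ℝ} (hc : 0 ≤ c) (h : ∀ z ∈ polydisk n, Qpoly n f z ≤ c) :
    blochSemiPoly n f ≤ c :=
  Real.sSup_le (by rintro _ ⟨z, hz, rfl⟩; exact h z hz) hc

theorem norm_fderiv_apply_le_blochSemiPoly (hf : BddAbove (blochValuesPoly n f))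
    (hz : z ∈ polydisk n) (u : Fin n → ℂ) :
    ‖fderiv ℂ f z u‖ ≤ blochSemiPoly n f * Real.sqrt (polyH n z u) :=
  (norm_fderiv_apply_le_Qpoly hz u).trans (by gcongr; exact le_csSup hf ⟨z, hz, rfl⟩)

theorem norm_fderiv_comp_apply_le {φ : (Fin n → ℂ) → Fin n → ℂ} {u : Fin n → ℂ}
    (hf : IsBlochPoly n f) (hφz : φ z ∈ polydisk n) (hφ : DifferentiableAt ℂ φ z)
    (hH : polyH n (φ z) (fderiv ℂ φ z u) ≤ polyH n z u) :
    ‖fderiv ℂ (f ∘ φ) z u‖ ≤ blochSemiPoly n f * Real.sqrt (polyH n z u) := by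
  rw [fderiv_comp z (hf.1.differentiableAt (polydisk_mem_nhds hφz)) hφ,
    ContinuousLinearMap.comp_apply]
  exact (norm_fderiv_apply_le_blochSemiPoly hf.2 hφz _).trans
    (mul_le_mul_of_nonneg_left (Real.sqrt_le_sqrt hH) (blochSemiPoly_nonneg f))

theorem polyH_fderiv_le_of_bergmanConstPoly_le_one {φ : (Fin n → ℂ) → Fin n → ℂ}
    (hmap : MapsTo φ (polydisk n) (polydisk n)) (hφ : DifferentiableOn ℂ φ (polydisk n))
    (hB : bergmanConstPoly n φ ≤ 1) (hz : z ∈ polydisk n) (u : Fin n → ℂ) :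
    polyH n (φ z) (fderiv ℂ φ z u) ≤ polyH n z u := by
  rcases eq_or_ne u 0 with rfl | hu
  · simp [polyH]
  -- `sSup` of an unbounded set is `0`; `hB` has content because Schwarz bounds the quotients.
  have hbdd : BddAbove {r : ℝ | ∃ z ∈ polydisk n, ∃ u : Fin n → ℂ, u ≠ 0 ∧
      r = Real.sqrt (polyH n (φ z) (fderiv ℂ φ z u) / polyH n z u)} := by
    refine ⟨Real.sqrt n, ?_⟩
    rintro _ ⟨z, hz, u, hu, rfl⟩
    exact Real.sqrt_le_sqrt
      ((div_le_iff₀ (polyH_pos hz hu)).2 (polyH_fderiv_le_card_mul hmap hφ hz u))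
  have hle := (le_csSup hbdd ⟨z, hz, u, hu, rfl⟩).trans hB
  rwa [Real.sqrt_le_one, div_le_one (polyH_pos hz hu)] at hle

theorem Qpoly_comp_le_blochSemiPoly {φ : (Fin n → ℂ) → Fin n → ℂ} (hf : IsBlochPoly n f)
    (hmap : MapsTo φ (polydisk n) (polydisk n)) (hφ : DifferentiableOn ℂ φ (polydisk n))
    (hB : bergmanConstPoly n φ ≤ 1) (hz : z ∈ polydisk n) :
    Qpoly n (f ∘ φ) z ≤ blochSemiPoly n f :=
  Qpoly_le hz (blochSemiPoly_nonneg f) fun u =>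
    norm_fderiv_comp_apply_le hf (hmap hz) (hφ.differentiableAt (polydisk_mem_nhds hz))
      (polyH_fderiv_le_of_bergmanConstPoly_le_one hmap hφ hB hz u)

theorem blochSemiPoly_le_of_tendstoLocallyUniformlyOn {g : (Fin n → ℂ) → ℂ}
    {S : ℕ → (Fin n → ℂ) → Fin n → ℂ} (hf : DifferentiableOn ℂ f (polydisk n))
    (hg : IsBlochPoly n g) (hS : ∀ j, IsPolydiskAut n (S j))
    (hconv : TendstoLocallyUniformlyOn (fun j => g ∘ S j) f atTop (polydisk n)) :
    blochSemiPoly n f ≤ blochSemiPoly n g := by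
  refine blochSemiPoly_le (blochSemiPoly_nonneg g) fun z hz =>
    Qpoly_le hz (blochSemiPoly_nonneg g) fun u => ?_
  have hlim := tendsto_fderiv_apply_of_tendstoLocallyUniformlyOn (isOpen_polydisk n)
    (.of_forall fun j => hg.1.comp (hS j).1 (hS j).2.1.mapsTo) hconv hz
    (hf.differentiableAt (polydisk_mem_nhds hz)) u
  refine le_of_tendsto' hlim.norm fun j => norm_fderiv_comp_apply_le hg ((hS j).2.1.mapsTo hz)
    ((hS j).1.differentiableAt (polydisk_mem_nhds hz)) ((hS j).polyH_fderiv hz u).le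

end Bloch

/-- If `φ` is a holomorphic self-map of `𝔻ⁿ` with `φ(0) = 0` and `B_φ ≤ 1`, and
`φ ∘ S_j` converges uniformly on compact subsets of `𝔻ⁿ` to the identity for
some sequence of automorphisms `S_j` of `𝔻ⁿ`, then `C_φ` is an isometry on the
Bloch space of `𝔻ⁿ`. -/
theorem isometry_of_bergmanConst_le_one_and_approx_identity (n : ℕ)
    (φ : (Fin n → ℂ) → Fin n → ℂ)
    (hmap : MapsTo φ (polydisk n) (polydisk n))
    (hφ : DifferentiableOn ℂ φ (polydisk n))
    (h0 : φ 0 = 0)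
    (hB : bergmanConstPoly n φ ≤ 1)
    (S : ℕ → (Fin n → ℂ) → Fin n → ℂ)
    (hS : ∀ j, IsPolydiskAut n (S j))
    (hconv : ∀ K ⊆ polydisk n, IsCompact K →
      TendstoUniformlyOn (fun j => φ ∘ S j) id Filter.atTop K) :
    ∀ f : (Fin n → ℂ) → ℂ, IsBlochPoly n f →
      IsBlochPoly n (f ∘ φ) ∧ blochNormPoly n (f ∘ φ) = blochNormPoly n f := by
  intro f hf
  have hupper (z) (hz : z ∈ polydisk n) : Qpoly n (f ∘ φ) z ≤ blochSemiPoly n f :=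
    Qpoly_comp_le_blochSemiPoly hf hmap hφ hB hz
  have hfφ : IsBlochPoly n (f ∘ φ) :=
    ⟨hf.1.comp hφ hmap, ⟨_, by rintro _ ⟨z, hz, rfl⟩; exact hupper z hz⟩⟩
  have hlim : TendstoLocallyUniformlyOn (fun j => (f ∘ φ) ∘ S j) f atTop (polydisk n) :=
    hf.1.continuousOn.comp_tendstoLocallyUniformlyOn_id (isOpen_polydisk n)
      ((tendstoLocallyUniformlyOn_iff_forall_isCompact (isOpen_polydisk n)).2 hconv)
  have hsemi : blochSemiPoly n (f ∘ φ) = blochSemiPoly n f :=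
    le_antisymm (blochSemiPoly_le (blochSemiPoly_nonneg f) hupper)
      (blochSemiPoly_le_of_tendstoLocallyUniformlyOn hf.1 hfφ hS hlim)
  refine ⟨hfφ, ?_⟩
  rw [blochNormPoly, blochNormPoly, hsemi, Function.comp_apply, h0]
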